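/- Let n and m be positive even integers, let f : 𝔽₂ⁿ → 𝔽₂ and g : 𝔽₂^m → 𝔽₂ be bent functions, let μ ∈ {1,…,n}, ρ ∈ {1,…,m}, let f₀, f₁ be the restrictions of f at coordinate μ and g₀, g₁ the restrictions of g at coordinate ρ, and let h(x,y) = f₀(x) ⊕ g₀(y) ⊕ (f₀(x)⊕f₁(x))·(g₀(y)⊕g₁(y)) (a bent function in n+m−2 variables). Let f̄₀, f̄₁ : 𝔽₂^{n−1} → 𝔽₂ be the restrictions of the dual f̃ at coordinate μ and ḡ₀, ḡ₁ : 𝔽₂^{m−1} → 𝔽₂ the restrictions of the dual g̃ at coordinate ρ. Then the dual of h satisfies h̃(x,y) = f̄₀(x) ⊕ ḡ₀(y) ⊕ (f̄₀(x)⊕f̄₁(x))·(ḡ₀(y)⊕ḡ₁(y)) for all x ∈ 𝔽₂^{n−1}, y ∈ 𝔽₂^{m−1}. -/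
import Mathlib


open Finset

/-- The sign `(-1)^b` for `b ∈ 𝔽₂`. -/
def chi (b : ZMod 2) : ℤ := if b = 0 then 1 else -1

/-- The Walsh transform of a Boolean function in `n` variables. -/
def walsh {n : ℕ} (f : (Fin n → ZMod 2) → ZMod 2) (ω : Fin n → ZMod 2) : ℤ :=
  ∑ x : Fin n → ZMod 2, chi (f x + ∑ i, ω i * x i)

/-- The Walsh transform of a Boolean function given on a product `𝔽₂ⁿ × 𝔽₂^m`. -/
def walsh2 {n m : ℕ} (f : (Fin n → ZMod 2) → (Fin m → ZMod 2) → ZMod 2)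
    (α : Fin n → ZMod 2) (β : Fin m → ZMod 2) : ℤ :=
  ∑ x : Fin n → ZMod 2, ∑ y : Fin m → ZMod 2,
    chi (f x y + (∑ i, α i * x i) + (∑ j, β j * y j))

/-- A Boolean function in `n` variables is bent if its Walsh transform only
takes the values `±2^(n/2)`. -/
def IsBent (n : ℕ) (f : (Fin n → ZMod 2) → ZMod 2) : Prop :=
  ∀ a, walsh f a = 2 ^ (n / 2) ∨ walsh f a = -(2 ^ (n / 2))

/-- Bentness for a function given on a product, i.e. as a function in `n + m` variables. -/
def IsBent2 (n m : ℕ) (f : (Fin n → ZMod 2) → (Fin m → ZMod 2) → ZMod 2) : Prop :=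
  ∀ α β, walsh2 f α β = 2 ^ ((n + m) / 2) ∨ walsh2 f α β = -(2 ^ ((n + m) / 2))

/-- `fd` is the dual of a bent function `f`:  `W_f(ω) = 2^(n/2) (−1)^{fd(ω)}`. -/
def IsDual {n : ℕ} (f fd : (Fin n → ZMod 2) → ZMod 2) : Prop :=
  ∀ ω, walsh f ω = 2 ^ (n / 2) * chi (fd ω)

/-- The dual for a bent function given on a product (a function of `n + m` variables). -/
def IsDual2 {n m : ℕ} (f fd : (Fin n → ZMod 2) → (Fin m → ZMod 2) → ZMod 2) : Prop :=
  ∀ α β, walsh2 f α β = 2 ^ ((n + m) / 2) * chi (fd α β)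

/-- Insert the bit `b` at position `μ`, giving a vector of length `n` from one of length `n-1`. -/
def insertAt {n : ℕ} (μ : Fin n) (b : ZMod 2) (x : Fin (n - 1) → ZMod 2) : Fin n → ZMod 2 :=
  fun i =>
    if h : (i : ℕ) < (μ : ℕ) then x ⟨i, by have := μ.isLt; omega⟩
    else if h' : (μ : ℕ) < (i : ℕ) then x ⟨(i : ℕ) - 1, by have := i.isLt; omega⟩
    else b

/-- Hamming weight of a vector in `𝔽₂ⁿ`. -/
def wt {n : ℕ} (ω : Fin n → ZMod 2) : ℕ := (Finset.univ.filter fun i => ω i ≠ 0).card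

/-- `t`-resiliency (with `t : ℤ`, so that the convention that every function is
`(-1)`-resilient holds). -/
def Resilient {n : ℕ} (t : ℤ) (f : (Fin n → ZMod 2) → ZMod 2) : Prop :=
  ∀ ω, (wt ω : ℤ) ≤ t → walsh f ω = 0

/-- `t`-resiliency for a function given on a product `𝔽₂ⁿ × 𝔽₂^m`. -/
def Resilient2 {n m : ℕ} (t : ℤ) (f : (Fin n → ZMod 2) → (Fin m → ZMod 2) → ZMod 2) : Prop :=
  ∀ α β, (wt α + wt β : ℤ) ≤ t → walsh2 f α β = 0

lemma chi_zero : chi 0 = 1 := by decide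
lemma chi_one : chi 1 = -1 := by decide
lemma chi_inj : ∀ a b : ZMod 2, chi a = chi b → a = b := by decide
lemma chi_key' : ∀ a b c d : ZMod 2,
    2 * chi (a + c + (a + b) * (c + d)) =
      chi a * chi c + chi b * chi c + chi a * chi d - chi b * chi d := by decide
lemma zmod2_arg : ∀ p q r s u v : ZMod 2,
    p + r + (p + q) * (r + s) + u + v =
      (p + u) + (r + v) + ((p + u) + (q + u)) * ((r + v) + (s + v)) := by decide

lemma insertAt_self {n : ℕ} (μ : Fin (n + 1)) (b : ZMod 2) (x : Fin n → ZMod 2) :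
    insertAt μ b x μ = b := by simp [insertAt]

lemma insertAt_succAbove {n : ℕ} (μ : Fin (n + 1)) (b : ZMod 2) (x : Fin n → ZMod 2)
    (j : Fin n) : insertAt μ b x (μ.succAbove j) = x j := by
  rcases Nat.lt_or_ge (j : ℕ) (μ : ℕ) with hc | hc
  · have h1 : μ.succAbove j = j.castSucc :=
      Fin.succAbove_of_castSucc_lt μ j (by rwa [Fin.lt_def, Fin.coe_castSucc])
    rw [h1]
    simp only [insertAt, Fin.coe_castSucc]
    rw [dif_pos hc]
    exact congrArg x (Fin.ext rfl)
  · have h1 : μ.succAbove j = j.succ :=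
      Fin.succAbove_of_le_castSucc μ j (by rwa [Fin.le_def, Fin.coe_castSucc])
    rw [h1]
    simp only [insertAt, Fin.val_succ]
    rw [dif_neg (by omega), dif_pos (by omega)]
    exact congrArg x (Fin.ext (by simp))

lemma zmod2_sum (G : ZMod 2 → ℤ) : ∑ b, G b = G 0 + G 1 := by
  have h : (univ : Finset (ZMod 2)) = {0, 1} := by decide
  rw [h, Finset.sum_insert (by decide), Finset.sum_singleton]

lemma sum_insert_split {n : ℕ} (μ : Fin (n + 1)) (F : (Fin (n + 1) → ZMod 2) → ℤ) :
    ∑ x, F x = ∑ x' : Fin n → ZMod 2, (F (insertAt μ 0 x') + F (insertAt μ 1 x')) := by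
  have hbij : Function.Bijective
      (fun p : ZMod 2 × (Fin n → ZMod 2) => insertAt μ p.1 p.2) := by
    apply Function.bijective_iff_has_inverse.mpr
    refine ⟨fun x => (x μ, fun j => x (μ.succAbove j)), fun p => ?_, fun x => ?_⟩
    · refine Prod.ext ?_ ?_
      · exact insertAt_self μ p.1 p.2
      · exact funext fun j => insertAt_succAbove μ p.1 p.2 j
    · funext i
      rcases eq_or_ne i μ with rfl | hne
      · exact insertAt_self ..
      · obtain ⟨j, rfl⟩ := Fin.exists_succAbove_eq hne
        exact insertAt_succAbove ..
  rw [← Fintype.sum_bijective _ hbij _ F (fun p => rfl), Fintype.sum_prod_type,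
    Finset.sum_comm]
  refine Finset.sum_congr rfl fun x' _ => ?_
  exact zmod2_sum fun b => F (insertAt μ b x')

lemma dot_insertAt {n : ℕ} (μ : Fin (n + 1)) (a b : ZMod 2) (ω x : Fin n → ZMod 2) :
    ∑ i, insertAt μ a ω i * insertAt μ b x i = a * b + ∑ j, ω j * x j := by
  rw [Fin.sum_univ_succAbove _ μ]
  simp [insertAt_self, insertAt_succAbove]

lemma chi_add (a b : ZMod 2) : chi (a + b) = chi a * chi b := by revert a b; decide

lemma walsh_insertAt {n : ℕ} (f : (Fin (n + 1) → ZMod 2) → ZMod 2) (μ : Fin (n + 1))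
    (a : ZMod 2) (ω : Fin n → ZMod 2) :
    walsh f (insertAt μ a ω) =
      walsh (fun x => f (insertAt μ 0 x)) ω + chi a * walsh (fun x => f (insertAt μ 1 x)) ω := by
  unfold walsh
  rw [sum_insert_split μ, Finset.sum_add_distrib, Finset.mul_sum]
  congr 1
  · refine Finset.sum_congr rfl fun x' _ => ?_
    rw [dot_insertAt, mul_zero, zero_add]
    exact rfl
  · refine Finset.sum_congr rfl fun x' _ => ?_
    rw [dot_insertAt, mul_one, show f (insertAt μ 1 x') + (a + ∑ j, ω j * x' j)
        = (f (insertAt μ 1 x') + ∑ j, ω j * x' j) + a by ring, chi_add, mul_comm]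
    exact rfl

lemma walsh_insertAt' {n : ℕ} (f : (Fin (n + 1) → ZMod 2) → ZMod 2) (μ : Fin (n + 1))
    (a : ZMod 2) (f0 f1 : (Fin n → ZMod 2) → ZMod 2)
    (h0 : ∀ z, f0 z = f (insertAt μ 0 z)) (h1 : ∀ z, f1 z = f (insertAt μ 1 z))
    (ω : Fin n → ZMod 2) :
    walsh f (insertAt μ a ω) = walsh f0 ω + chi a * walsh f1 ω := by
  have e0 : f0 = fun z => f (insertAt μ 0 z) := funext h0
  have e1 : f1 = fun z => f (insertAt μ 1 z) := funext h1
  rw [walsh_insertAt, e0, e1]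

/-- the dual of the bent function produced by the modified indirect sum
is obtained by the same formula from the restrictions of the duals. -/
theorem dual_of_restriction_indirect_sum (n m : ℕ)
    (hn0 : 0 < n) (hm0 : 0 < m) (hn : Even n) (hm : Even m)
    (f : (Fin n → ZMod 2) → ZMod 2) (g : (Fin m → ZMod 2) → ZMod 2)
    (hf : IsBent n f) (hg : IsBent m g) (μ : Fin n) (ρ : Fin m)
    (ft : (Fin n → ZMod 2) → ZMod 2) (gt : (Fin m → ZMod 2) → ZMod 2)
    (hft : IsDual f ft) (hgt : IsDual g gt)
    (f0 f1 : (Fin (n - 1) → ZMod 2) → ZMod 2)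
    (g0 g1 : (Fin (m - 1) → ZMod 2) → ZMod 2)
    (hf0 : ∀ x, f0 x = f (insertAt μ 0 x)) (hf1 : ∀ x, f1 x = f (insertAt μ 1 x))
    (hg0 : ∀ y, g0 y = g (insertAt ρ 0 y)) (hg1 : ∀ y, g1 y = g (insertAt ρ 1 y))
    (fb0 fb1 : (Fin (n - 1) → ZMod 2) → ZMod 2)
    (gb0 gb1 : (Fin (m - 1) → ZMod 2) → ZMod 2)
    (hfb0 : ∀ x, fb0 x = ft (insertAt μ 0 x)) (hfb1 : ∀ x, fb1 x = ft (insertAt μ 1 x))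
    (hgb0 : ∀ y, gb0 y = gt (insertAt ρ 0 y)) (hgb1 : ∀ y, gb1 y = gt (insertAt ρ 1 y))
    (h : (Fin (n - 1) → ZMod 2) → (Fin (m - 1) → ZMod 2) → ZMod 2)
    (hh : ∀ x y, h x y = f0 x + g0 y + (f0 x + f1 x) * (g0 y + g1 y))
    (ht : (Fin (n - 1) → ZMod 2) → (Fin (m - 1) → ZMod 2) → ZMod 2)
    (hht : IsDual2 h ht) :
    ∀ x y, ht x y = fb0 x + gb0 y + (fb0 x + fb1 x) * (gb0 y + gb1 y) := by
  obtain ⟨n', rfl⟩ : ∃ k, n = k + 1 := ⟨n - 1, by omega⟩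
  obtain ⟨m', rfl⟩ : ∃ k, m = k + 1 := ⟨m - 1, by omega⟩
  intro x y
  have A0 : walsh f0 x + walsh f1 x = 2 ^ ((n' + 1) / 2) * chi (fb0 x) := by
    have h1 := walsh_insertAt' f μ 0 f0 f1 hf0 hf1 x
    rw [hft, chi_zero, one_mul, ← hfb0] at h1
    exact h1.symm
  have A1 : walsh f0 x - walsh f1 x = 2 ^ ((n' + 1) / 2) * chi (fb1 x) := by
    have h1 := walsh_insertAt' f μ 1 f0 f1 hf0 hf1 x
    rw [hft, chi_one, ← hfb1] at h1
    linarith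
  have C0 : walsh g0 y + walsh g1 y = 2 ^ ((m' + 1) / 2) * chi (gb0 y) := by
    have h1 := walsh_insertAt' g ρ 0 g0 g1 hg0 hg1 y
    rw [hgt, chi_zero, one_mul, ← hgb0] at h1
    exact h1.symm
  have C1 : walsh g0 y - walsh g1 y = 2 ^ ((m' + 1) / 2) * chi (gb1 y) := by
    have h1 := walsh_insertAt' g ρ 1 g0 g1 hg0 hg1 y
    rw [hgt, chi_one, ← hgb1] at h1
    linarith
  have h2W : 2 * walsh2 h x y =
      walsh f0 x * walsh g0 y + walsh f1 x * walsh g0 y + walsh f0 x * walsh g1 y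
        - walsh f1 x * walsh g1 y := by
    have step : ∀ a : Fin (n' + 1 - 1) → ZMod 2,
        2 * ∑ b : Fin (m' + 1 - 1) → ZMod 2,
            chi (h a b + (∑ i, x i * a i) + (∑ j, y j * b j)) =
          ∑ b : Fin (m' + 1 - 1) → ZMod 2,
            (chi (f0 a + ∑ i, x i * a i) * chi (g0 b + ∑ j, y j * b j)
             + chi (f1 a + ∑ i, x i * a i) * chi (g0 b + ∑ j, y j * b j)
             + chi (f0 a + ∑ i, x i * a i) * chi (g1 b + ∑ j, y j * b j)
             - chi (f1 a + ∑ i, x i * a i) * chi (g1 b + ∑ j, y j * b j)) := by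
      intro a
      rw [Finset.mul_sum]
      refine Finset.sum_congr rfl fun b _ => ?_
      rw [hh, zmod2_arg]
      exact chi_key' _ _ _ _
    unfold walsh2 walsh
    rw [Finset.mul_sum]
    rw [Finset.sum_congr rfl fun a _ => step a]
    simp only [Finset.sum_add_distrib, Finset.sum_sub_distrib, ← Finset.mul_sum,
      ← Finset.sum_mul]
  have hW := hht x y
  have h6 : 2 * chi (fb0 x + gb0 y + (fb0 x + fb1 x) * (gb0 y + gb1 y)) =
      chi (fb0 x) * chi (gb0 y) + chi (fb1 x) * chi (gb0 y)
        + chi (fb0 x) * chi (gb1 y) - chi (fb1 x) * chi (gb1 y) := chi_key' _ _ _ _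
  obtain ⟨r, hr⟩ := hn
  obtain ⟨s, hs⟩ := hm
  have hexp : (2 : ℤ) ^ ((n' + 1) / 2) * 2 ^ ((m' + 1) / 2)
      = 2 ^ ((n' + 1 - 1 + (m' + 1 - 1)) / 2) * 2 := by
    rw [← pow_add, ← pow_succ]
    congr 1
    omega
  have key : 4 * walsh2 h x y
      = 2 * (2 ^ ((n' + 1) / 2) * 2 ^ ((m' + 1) / 2))
          * chi (fb0 x + gb0 y + (fb0 x + fb1 x) * (gb0 y + gb1 y)) := by
    linear_combination 2 * h2W + 2 * walsh g0 y * A0 + 2 * walsh g1 y * A1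
      + (2 ^ ((n' + 1) / 2) * chi (fb0 x) + 2 ^ ((n' + 1) / 2) * chi (fb1 x)) * C0
      + (2 ^ ((n' + 1) / 2) * chi (fb0 x) - 2 ^ ((n' + 1) / 2) * chi (fb1 x)) * C1
      - 2 ^ ((n' + 1) / 2) * 2 ^ ((m' + 1) / 2) * h6
  have hWchi : (4 * 2 ^ ((n' + 1 - 1 + (m' + 1 - 1)) / 2) : ℤ) * chi (ht x y)
      = (4 * 2 ^ ((n' + 1 - 1 + (m' + 1 - 1)) / 2) : ℤ)
          * chi (fb0 x + gb0 y + (fb0 x + fb1 x) * (gb0 y + gb1 y)) := by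
    have : 4 * walsh2 h x y = 4 * (2 ^ ((n' + 1 - 1 + (m' + 1 - 1)) / 2) * chi (ht x y)) := by
      rw [hW]
    rw [mul_assoc, ← this, key, hexp, mul_assoc]
    ring
  have hne : (4 * (2 : ℤ) ^ ((n' + 1 - 1 + (m' + 1 - 1)) / 2) : ℤ) ≠ 0 := by positivity
  exact chi_inj _ _ (mul_left_cancel₀ hne hWchi)
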